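/- Let ρ and σ be positive definite n×n complex matrices, α > 1, z > 1, and for a positive definite matrix H define f(H) := z · Tr(σ^{(z-α)/(2z)} ρ^{α/z} σ^{(z-α)/(2z)} H) − (z−1) · Tr[(σ^{(z-1)/(2z)} H σ^{(z-1)/(2z)})^{z/(z-1)}]. Then sup over positive definite H of f(H) equals Tr[(σ^{(1-α)/(2z)} ρ^{α/z} σ^{(1-α)/(2z)})^{z}], and the supremum is attained at H = σ^{(1-z)/(2z)} (σ^{(1-α)/(2z)} ρ^{α/z} σ^{(1-α)/(2z)})^{z-1} σ^{(1-z)/(2z)}. -/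

import Mathlib

open Matrix
open scoped ComplexOrder

-- Real power of a (Hermitian) matrix via the spectral functional calculus;
-- junk value `0` for non-Hermitian matrices.
open Classical in
noncomputable def mpow {n : Type*} [Fintype n] [DecidableEq n]
    (A : Matrix n n ℂ) (r : ℝ) : Matrix n n ℂ :=
  if h : A.IsHermitian then h.cfc (fun x => x ^ r) else 0

/-!
Write `B = σ^{(z-1)/(2z)}` and `M = σ^{(1-α)/(2z)} ρ^{α/z} σ^{(1-α)/(2z)}`. Since
`σ^{(z-α)/(2z)} = B σ^{(1-α)/(2z)} = σ^{(1-α)/(2z)} B`, cyclicity of the trace turns the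
functional into `f(H) = z Tr(M K) - (z-1) Tr K^{z/(z-1)}` with `K = B H B`, which ranges over
positive definite matrices. In eigenbases `(u_i)` of `M` and `(v_j)` of `K`,
`Tr(M K) = ∑ᵢⱼ |⟨u_i, v_j⟩|² μᵢ κⱼ` with a doubly stochastic weight matrix, so the scalar Young
inequality `μ κ ≤ μ^z / z + κ^q / q` (`q = z/(z-1)`) summed against these weights gives
`z Tr(M K) ≤ Tr M^z + (z-1) Tr K^q`. Equality holds at `K = M^{z-1}`, i.e. at `H = Hbar`.
-/

open scoped MatrixOrder

section

variable {n : Type*} [Fintype n] [DecidableEq n] {A : Matrix n n ℂ}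

lemma mpow_eq_cfc (hA : A.IsHermitian) (r : ℝ) : mpow A r = cfc (fun x : ℝ => x ^ r) A := by
  rw [hA.cfc_eq]
  exact dif_pos hA

lemma re_trace_mpow (hA : A.IsHermitian) (r : ℝ) :
    (mpow A r).trace.re = ∑ i, hA.eigenvalues i ^ r := by
  rw [mpow, dif_pos hA, IsHermitian.cfc, Unitary.conjStarAlgAut_apply, trace_mul_cycle,
    Unitary.coe_star_mul_self, one_mul, trace_diagonal]
  simp

lemma mpow_isHermitian (hA : A.IsHermitian) (r : ℝ) : (mpow A r).IsHermitian := by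
  rw [mpow_eq_cfc hA]
  exact cfc_predicate _ A

lemma mpow_posDef (hA : A.PosDef) (r : ℝ) : (mpow A r).PosDef := by
  rw [mpow_eq_cfc hA.1, ← isStrictlyPositive_iff_posDef]
  exact (cfc_isStrictlyPositive_iff _ _ (A.finite_real_spectrum.continuousOn _) hA.1).mpr
    fun x hx => Real.rpow_pos_of_pos (hA.isStrictlyPositive.spectrum_pos hx) r

lemma mpow_zero (hA : A.IsHermitian) : mpow A 0 = 1 := by
  rw [mpow_eq_cfc hA]
  simpa using cfc_const_one ℝ A

lemma mpow_one (hA : A.IsHermitian) : mpow A 1 = A := by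
  rw [mpow_eq_cfc hA]
  exact (cfc_congr fun x _ => Real.rpow_one x).trans (cfc_id' ℝ A hA)

lemma mpow_add (hA : A.PosDef) (r s : ℝ) : mpow A (r + s) = mpow A r * mpow A s := by
  rw [mpow_eq_cfc hA.1, mpow_eq_cfc hA.1, mpow_eq_cfc hA.1,
    ← cfc_mul _ _ A (A.finite_real_spectrum.continuousOn _)
      (A.finite_real_spectrum.continuousOn _)]
  exact cfc_congr fun x hx => Real.rpow_add (hA.isStrictlyPositive.spectrum_pos hx) r s

lemma mpow_mul (hA : A.PosSemidef) (r s : ℝ) : mpow A (r * s) = mpow (mpow A r) s := by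
  rw [mpow_eq_cfc (mpow_isHermitian hA.1 r), mpow_eq_cfc hA.1, mpow_eq_cfc hA.1,
    ← cfc_comp' (fun x : ℝ => x ^ s) (fun x : ℝ => x ^ r) A
      ((A.finite_real_spectrum.image _).continuousOn _) (A.finite_real_spectrum.continuousOn _)]
  exact cfc_congr fun x hx => Real.rpow_mul (spectrum_nonneg_of_nonneg hA.nonneg hx) r s

lemma posDef_mpow_mul_mul_mpow {X : Matrix n n ℂ} (hA : A.PosDef) (hX : X.PosDef) (r : ℝ) :
    (mpow A r * X * mpow A r).PosDef := by
  have h := (Matrix.IsUnit.posDef_star_left_conjugate_iff (mpow_posDef hA r).isUnit).mpr hX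
  rwa [star_eq_conjTranspose, (mpow_isHermitian hA.1 r).eq] at h

lemma normSq_mem_doublyStochastic {W : Matrix n n ℂ} (hW : W ∈ unitaryGroup n ℂ) :
    of (fun i j => Complex.normSq (W i j)) ∈ doublyStochastic ℝ n := by
  have hrow : ∀ i, ∑ j, (Complex.normSq (W i j) : ℂ) = 1 := fun i => by
    simpa [mul_apply, Complex.mul_conj] using congr_fun₂ (mem_unitaryGroup_iff.mp hW) i i
  have hcol : ∀ j, ∑ i, (Complex.normSq (W i j) : ℂ) = 1 := fun j => by
    simpa [mul_apply, Complex.conj_mul', Complex.normSq_eq_norm_sq] using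
      congr_fun₂ (mem_unitaryGroup_iff'.mp hW) j j
  refine mem_doublyStochastic_iff_sum.mpr
    ⟨fun i j => Complex.normSq_nonneg _, fun i => ?_, fun j => ?_⟩
  · exact_mod_cast hrow i
  · exact_mod_cast hcol j

lemma sum_mul_mul_le_of_mem_doublyStochastic {P : Matrix n n ℝ}
    (hP : P ∈ doublyStochastic ℝ n) {a b : n → ℝ} (ha : ∀ i, 0 ≤ a i) (hb : ∀ j, 0 ≤ b j)
    {p q : ℝ} (hpq : p.HolderConjugate q) :
    ∑ i, ∑ j, P i j * (a i * b j) ≤ (∑ i, a i ^ p) / p + (∑ j, b j ^ q) / q := by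
  calc ∑ i, ∑ j, P i j * (a i * b j)
      ≤ ∑ i, ∑ j, P i j * (a i ^ p / p + b j ^ q / q) := by
        gcongr with i _ j _
        · exact nonneg_of_mem_doublyStochastic hP
        · exact Real.young_inequality_of_nonneg (ha i) (hb j) hpq
    _ = (∑ i, a i ^ p) / p + (∑ j, b j ^ q) / q := by
        simp only [mul_add, Finset.sum_add_distrib, ← Finset.sum_mul, ← Finset.mul_sum,
          sum_row_of_mem_doublyStochastic hP]
        rw [Finset.sum_comm]
        simp only [← Finset.sum_mul, sum_col_of_mem_doublyStochastic hP, one_mul, Finset.sum_div]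

namespace Matrix

lemma trace_diagonal_mul_diagonal_mul_star (W : Matrix n n ℂ) (a b : n → ℝ) :
    (diagonal (RCLike.ofReal ∘ a) * W * diagonal (RCLike.ofReal ∘ b) * star W).trace =
      ↑(∑ i, ∑ j, Complex.normSq (W i j) * (a i * b j)) := by
  simp only [trace, diag, mul_apply, diagonal_apply, ite_mul, zero_mul, mul_ite, mul_zero,
    Finset.sum_ite_eq, Finset.sum_ite_eq', Finset.mem_univ, if_true, star_apply, Complex.ofReal_sum]
  refine Finset.sum_congr rfl fun i _ => Finset.sum_congr rfl fun j _ => ?_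
  simp only [Function.comp_apply, Complex.star_def, RCLike.ofReal_eq_complex_ofReal,
    Complex.ofReal_mul, Complex.normSq_eq_conj_mul_self]
  ring

lemma IsHermitian.trace_mul_eq {A B : Matrix n n ℂ} (hA : A.IsHermitian) (hB : B.IsHermitian) :
    (A * B).trace = ↑(∑ i, ∑ j,
      Complex.normSq ((star (hA.eigenvectorUnitary : Matrix n n ℂ) * hB.eigenvectorUnitary) i j) *
        (hA.eigenvalues i * hB.eigenvalues j)) := by
  set V : Matrix n n ℂ := ↑hA.eigenvectorUnitary
  set U : Matrix n n ℂ := ↑hB.eigenvectorUnitary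
  have hA' : A = V * diagonal (RCLike.ofReal ∘ hA.eigenvalues) * star V := by
    simpa using hA.spectral_theorem
  have hB' : B = U * diagonal (RCLike.ofReal ∘ hB.eigenvalues) * star U := by
    simpa using hB.spectral_theorem
  rw [← trace_diagonal_mul_diagonal_mul_star, star_mul, star_star]
  conv_lhs => rw [hA', hB']
  simp only [mul_assoc]
  rw [trace_mul_comm V]
  simp only [mul_assoc]

theorem PosSemidef.re_trace_mul_le {B : Matrix n n ℂ} (hA : A.PosSemidef) (hB : B.PosSemidef)
    {p q : ℝ} (hpq : p.HolderConjugate q) :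
    (A * B).trace.re ≤ (mpow A p).trace.re / p + (mpow B q).trace.re / q := by
  rw [hA.1.trace_mul_eq hB.1, Complex.ofReal_re, re_trace_mpow hA.1, re_trace_mpow hB.1]
  exact sum_mul_mul_le_of_mem_doublyStochastic
    (normSq_mem_doublyStochastic (star hA.1.eigenvectorUnitary * hB.1.eigenvectorUnitary).2)
    hA.eigenvalues_nonneg hB.eigenvalues_nonneg hpq

theorem PosSemidef.mul_re_trace_mul_sub_le {B : Matrix n n ℂ} (hA : A.PosSemidef)
    (hB : B.PosSemidef) {z : ℝ} (hz : 1 < z) :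
    z * (A * B).trace.re - (z - 1) * (mpow B (z / (z - 1))).trace.re ≤ (mpow A z).trace.re := by
  have hz0 : 0 < z := zero_lt_one.trans hz
  have hz1 : 0 < z - 1 := sub_pos.mpr hz
  have hyoung := hA.re_trace_mul_le hB (Real.HolderConjugate.conjExponent hz)
  rw [Real.conjExponent] at hyoung
  calc z * (A * B).trace.re - (z - 1) * (mpow B (z / (z - 1))).trace.re
      ≤ z * ((mpow A z).trace.re / z + (mpow B (z / (z - 1))).trace.re / (z / (z - 1)))
          - (z - 1) * (mpow B (z / (z - 1))).trace.re := by gcongr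
    _ = (mpow A z).trace.re := by field_simp; ring

theorem PosDef.mul_re_trace_mul_mpow_sub_eq (hA : A.PosDef) {z : ℝ} (hz : z ≠ 1) :
    z * (A * mpow A (z - 1)).trace.re - (z - 1) * (mpow (mpow A (z - 1)) (z / (z - 1))).trace.re
      = (mpow A z).trace.re := by
  have hz1 : z - 1 ≠ 0 := sub_ne_zero.mpr hz
  rw [← mpow_mul hA.posSemidef, mul_div_cancel₀ z hz1]
  nth_rewrite 1 [← mpow_one hA.1]
  rw [← mpow_add hA, add_sub_cancel]
  ring

end Matrix

end

theorem variational_trace_functional_general {n : Type*} [Fintype n] [DecidableEq n]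
    (ρ σ : Matrix n n ℂ) (hρ : ρ.PosDef) (hσ : σ.PosDef)
    (α z : ℝ) (hz : 1 < z) :
    let f : Matrix n n ℂ → ℝ := fun H =>
      z * ((mpow σ ((z - α) / (2 * z)) * mpow ρ (α / z) * mpow σ ((z - α) / (2 * z)) * H).trace).re
        - (z - 1) *
          ((mpow (mpow σ ((z - 1) / (2 * z)) * H * mpow σ ((z - 1) / (2 * z))) (z / (z - 1))).trace).re
    let Ψ : ℝ :=
      ((mpow (mpow σ ((1 - α) / (2 * z)) * mpow ρ (α / z) * mpow σ ((1 - α) / (2 * z))) z).trace).re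
    let Hbar : Matrix n n ℂ :=
      mpow σ ((1 - z) / (2 * z)) *
        mpow (mpow σ ((1 - α) / (2 * z)) * mpow ρ (α / z) * mpow σ ((1 - α) / (2 * z))) (z - 1) *
          mpow σ ((1 - z) / (2 * z))
    (∀ H : Matrix n n ℂ, H.PosDef → f H ≤ Ψ) ∧ Hbar.PosDef ∧ f Hbar = Ψ := by
  intro f Ψ Hbar
  set B := mpow σ ((z - 1) / (2 * z))
  set C := mpow σ ((1 - z) / (2 * z))
  set M := mpow σ ((1 - α) / (2 * z)) * mpow ρ (α / z) * mpow σ ((1 - α) / (2 * z))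
  have hM : M.PosDef := posDef_mpow_mul_mul_mpow hσ (mpow_posDef hρ _) _
  have hf : ∀ H, f H = z * (M * (B * H * B)).trace.re
      - (z - 1) * (mpow (B * H * B) (z / (z - 1))).trace.re := by
    intro H
    have hBS : mpow σ ((z - α) / (2 * z)) = B * mpow σ ((1 - α) / (2 * z)) := by
      rw [← mpow_add hσ]; congr 1; ring
    have hSB : mpow σ ((z - α) / (2 * z)) = mpow σ ((1 - α) / (2 * z)) * B := by
      rw [← mpow_add hσ]; congr 1; ring
    change z * (mpow σ _ * _ * mpow σ _ * H).trace.re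
      - (z - 1) * (mpow (B * H * B) _).trace.re = _
    nth_rewrite 1 [hBS]
    rw [hSB]
    simp only [M, mul_assoc]
    rw [trace_mul_comm B]
    simp only [mul_assoc]
  have hBC : B * C = 1 := by rw [← mpow_add hσ, ← mpow_zero hσ.1]; congr 1; ring
  have hCB : C * B = 1 := by rw [← mpow_add hσ, ← mpow_zero hσ.1]; congr 1; ring
  have hBHbarB : B * Hbar * B = mpow M (z - 1) := by
    change B * (C * mpow M (z - 1) * C) * B = _
    rw [← mul_assoc, ← mul_assoc, hBC, one_mul, mul_assoc, hCB, mul_one]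
  refine ⟨fun H hH => ?_, posDef_mpow_mul_mul_mpow hσ (mpow_posDef hM _) _, ?_⟩
  · rw [hf]
    exact hM.posSemidef.mul_re_trace_mul_sub_le
      (posDef_mpow_mul_mul_mpow hσ hH _).posSemidef hz
  · rw [hf, hBHbarB]
    exact hM.mul_re_trace_mul_mpow_sub_eq hz.ne'

/-- Variational formula: for positive definite `ρ, σ`, `α > 1`, `z > 1`,
`sup_{H > 0} f(H) = Tr[(σ^{(1-α)/(2z)} ρ^{α/z} σ^{(1-α)/(2z)})^z]`, attained at
`H = σ^{(1-z)/(2z)} (σ^{(1-α)/(2z)} ρ^{α/z} σ^{(1-α)/(2z)})^{z-1} σ^{(1-z)/(2z)}`. -/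
theorem variational_trace_functional {n : Type*} [Fintype n] [DecidableEq n]
    (ρ σ : Matrix n n ℂ) (hρ : ρ.PosDef) (hσ : σ.PosDef)
    (α z : ℝ) (hα : 1 < α) (hz : 1 < z) :
    let f : Matrix n n ℂ → ℝ := fun H =>
      z * ((mpow σ ((z - α) / (2 * z)) * mpow ρ (α / z) * mpow σ ((z - α) / (2 * z)) * H).trace).re
        - (z - 1) *
          ((mpow (mpow σ ((z - 1) / (2 * z)) * H * mpow σ ((z - 1) / (2 * z))) (z / (z - 1))).trace).re
    let Ψ : ℝ :=
      ((mpow (mpow σ ((1 - α) / (2 * z)) * mpow ρ (α / z) * mpow σ ((1 - α) / (2 * z))) z).trace).re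
    let Hbar : Matrix n n ℂ :=
      mpow σ ((1 - z) / (2 * z)) *
        mpow (mpow σ ((1 - α) / (2 * z)) * mpow ρ (α / z) * mpow σ ((1 - α) / (2 * z))) (z - 1) *
          mpow σ ((1 - z) / (2 * z))
    (∀ H : Matrix n n ℂ, H.PosDef → f H ≤ Ψ) ∧ Hbar.PosDef ∧ f Hbar = Ψ :=
  variational_trace_functional_general ρ σ hρ hσ α z hz
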